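/- With the setup of the previous equivalence, suppose additionally that every irreducible T(x)-module with endpoint at most t is thin (dim E_i^*W ≤ 1 for all i). Then the condition 'A_ℓχ is a relative t-codesign with respect to x for all 0 ≤ ℓ ≤ D' already implies that χ is orthogonal to every irreducible T(x)-module W with 1 ≤ r(W) ≤ t. -/

import Mathlib

open Matrix

noncomputable section

/-- The standard Hermitian dot product on `X → ℂ` (conjugation on the second argument). -/
def dotc {X : Type*} [Fintype X] (u v : X → ℂ) : ℂ := ∑ y, u y * (starRingEnd ℂ) (v y)

/-- The characteristic vector `x̂` of a vertex. -/
def xhat {X : Type*} [DecidableEq X] (x : X) : X → ℂ := Pi.single x 1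

/-- The characteristic vector of a subset. -/
def chiv {X : Type*} [DecidableEq X] (Y : Finset X) : X → ℂ := fun y => if y ∈ Y then 1 else 0

/-- A symmetric association scheme with `D` classes on a finite vertex set `X`,
presented by its associate matrices `A 0 = I, A 1, …, A D` and its primitive
idempotents `E 0 = |X|⁻¹ J, E 1, …, E D`. -/
structure AssocScheme (X : Type*) [Fintype X] [DecidableEq X] (D : ℕ) where
  A : Fin (D + 1) → Matrix X X ℂ
  E : Fin (D + 1) → Matrix X X ℂ
  A_zero : A 0 = 1
  A_symm : ∀ i, (A i).IsSymm
  A_entries : ∀ i x y, A i x y = 0 ∨ A i x y = 1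
  A_sum : ∑ i, A i = Matrix.of fun _ _ => (1 : ℂ)
  A_mul_closed : ∀ i j, ∃ p : Fin (D + 1) → ℂ, A i * A j = ∑ k, p k • A k
  A_comm : ∀ i j, A i * A j = A j * A i
  E_idem : ∀ i j, E i * E j = if i = j then E i else 0
  E_sum : ∑ j, E j = 1
  E_zero : E 0 = (Fintype.card X : ℂ)⁻¹ • Matrix.of fun _ _ => (1 : ℂ)
  E_in_A : ∀ j, ∃ q : Fin (D + 1) → ℂ, E j = ∑ i, q i • A i
  A_in_E : ∀ i, ∃ q : Fin (D + 1) → ℂ, A i = ∑ j, q j • E j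

namespace AssocScheme

variable {X : Type*} [Fintype X] [DecidableEq X] {D : ℕ}

/-- The associate matrices, reindexed by `ℕ` (zero outside `0,…,D`). -/
def AM (S : AssocScheme X D) (i : ℕ) : Matrix X X ℂ :=
  if h : i < D + 1 then S.A ⟨i, h⟩ else 0

/-- The primitive idempotents, reindexed by `ℕ` (zero outside `0,…,D`). -/
def EM (S : AssocScheme X D) (j : ℕ) : Matrix X X ℂ :=
  if h : j < D + 1 then S.E ⟨j, h⟩ else 0

/-- The dual idempotent `E_i^*(x)`: the diagonal matrix with `(y,y)`-entry `(A_i)_{x y}`. -/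
def Estar (S : AssocScheme X D) (x : X) (i : ℕ) : Matrix X X ℂ :=
  Matrix.diagonal fun y => S.AM i x y

/-- The dual associate matrix `A_j^*(x)`: diagonal with `(y,y)`-entry `|X| (E_j)_{x y}`. -/
def Astar (S : AssocScheme X D) (x : X) (j : ℕ) : Matrix X X ℂ :=
  Matrix.diagonal fun y => (Fintype.card X : ℂ) * S.EM j x y

/-- The subspace `E_i^*(x) V`. -/
def EstarSp (S : AssocScheme X D) (x : X) (i : ℕ) : Submodule ℂ (X → ℂ) :=
  LinearMap.range (S.Estar x i).mulVecLin

/-- The subspace `E_j V`. -/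
def ESp (S : AssocScheme X D) (j : ℕ) : Submodule ℂ (X → ℂ) :=
  LinearMap.range (S.EM j).mulVecLin

/-- The scheme is metric (P-polynomial) w.r.t. the ordering `A 0, …, A D`:
`A 1` generates the Bose–Mesner algebra, and left multiplication by `A 1` acts
tridiagonally on the dual decomposition `V = ⊕ᵢ E_i^*(x) V` for each base vertex. -/
def IsMetric (S : AssocScheme X D) : Prop :=
  (∀ i, S.A i ∈ Algebra.adjoin ℂ {S.A 1}) ∧
  ∀ (x : X) (i : ℕ) (v : X → ℂ), v ∈ S.EstarSp x i →
    (S.A 1).mulVec v ∈ S.EstarSp x (i - 1) ⊔ S.EstarSp x i ⊔ S.EstarSp x (i + 1)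

/-- The scheme is cometric (Q-polynomial) w.r.t. the ordering `E 0, …, E D`:
`A_1^*(x)` generates the dual Bose–Mesner algebra and acts tridiagonally on the
decomposition `V = ⊕ⱼ E_j V`, for each base vertex `x`. -/
def IsCometric (S : AssocScheme X D) : Prop :=
  (∀ (x : X) (j : Fin (D + 1)), S.Astar x j ∈ Algebra.adjoin ℂ {S.Astar x 1}) ∧
  ∀ (x : X) (j : ℕ) (v : X → ℂ), v ∈ S.ESp j →
    (S.Astar x 1).mulVec v ∈ S.ESp (j - 1) ⊔ S.ESp j ⊔ S.ESp (j + 1)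

/-- A vector `χ` is a code if `χ ∉ E_0 V` and `χ ∉ E_0^*(z) V` for every vertex `z`. -/
def IsCode (S : AssocScheme X D) (χ : X → ℂ) : Prop :=
  χ ∉ S.ESp 0 ∧ ∀ z : X, χ ∉ S.EstarSp z 0

/-- `δ_x(χ) = min { i ≠ 0 : E_i^*(x) χ ≠ 0 }`. -/
def deltaX (S : AssocScheme X D) (x : X) (χ : X → ℂ) : ℕ :=
  sInf {i : ℕ | i ≠ 0 ∧ (S.Estar x i).mulVec χ ≠ 0}

/-- `s_x(χ) = #{ i ≠ 0 : E_i^*(x) χ ≠ 0 }`. -/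
def sX (S : AssocScheme X D) (x : X) (χ : X → ℂ) : ℕ :=
  {i : ℕ | i ≠ 0 ∧ (S.Estar x i).mulVec χ ≠ 0}.ncard

/-- `δ^*(χ) = min { j ≠ 0 : E_j χ ≠ 0 }` (dual distance). -/
def deltaStar (S : AssocScheme X D) (χ : X → ℂ) : ℕ :=
  sInf {j : ℕ | j ≠ 0 ∧ (S.EM j).mulVec χ ≠ 0}

/-- `s^*(χ) = #{ j ≠ 0 : E_j χ ≠ 0 }` (dual degree). -/
def sStar (S : AssocScheme X D) (χ : X → ℂ) : ℕ :=
  {j : ℕ | j ≠ 0 ∧ (S.EM j).mulVec χ ≠ 0}.ncard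

/-- `δ(χ) = min { i ≠ 0 : ⟨χ, A_i χ⟩ ≠ 0 }` (minimum distance). -/
def deltaMin (S : AssocScheme X D) (χ : X → ℂ) : ℕ :=
  sInf {i : ℕ | i ≠ 0 ∧ dotc χ ((S.AM i).mulVec χ) ≠ 0}

/-- `s(χ) = #{ i ≠ 0 : ⟨χ, A_i χ⟩ ≠ 0 }` (degree). -/
def degree (S : AssocScheme X D) (χ : X → ℂ) : ℕ :=
  {i : ℕ | i ≠ 0 ∧ dotc χ ((S.AM i).mulVec χ) ≠ 0}.ncard

/-- `ψ` is a relative `t`-codesign w.r.t. `x`: `E_i^* ψ ∈ ℂ · A_i x̂` for `1 ≤ i ≤ t`. -/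
def RelCodesign (S : AssocScheme X D) (x : X) (t : ℕ) (ψ : X → ℂ) : Prop :=
  ∀ i : ℕ, 1 ≤ i → i ≤ t → ∃ c : ℂ, (S.Estar x i).mulVec ψ = c • (S.AM i).mulVec (xhat x)

/-- `ψ` is a relative `t`-design w.r.t. `x`: `E_j ψ ∈ ℂ · E_j x̂` for `1 ≤ j ≤ t`. -/
def RelDesign (S : AssocScheme X D) (x : X) (t : ℕ) (ψ : X → ℂ) : Prop :=
  ∀ j : ℕ, 1 ≤ j → j ≤ t → ∃ c : ℂ, (S.EM j).mulVec ψ = c • (S.EM j).mulVec (xhat x)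

/-- The Terwilliger algebra `T(x)`, generated by the Bose–Mesner algebra and the
dual Bose–Mesner algebra with respect to `x`. -/
def Talg (S : AssocScheme X D) (x : X) : Subalgebra ℂ (Matrix X X ℂ) :=
  Algebra.adjoin ℂ (Set.range S.A ∪ Set.range fun i : Fin (D + 1) => S.Estar x (i : ℕ))

/-- A `T(x)`-submodule of the standard module. -/
def IsTSub (S : AssocScheme X D) (x : X) (W : Submodule ℂ (X → ℂ)) : Prop :=
  ∀ F ∈ S.Talg x, ∀ v ∈ W, F.mulVec v ∈ W

/-- An irreducible `T(x)`-module inside the standard module. -/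
def IsIrr (S : AssocScheme X D) (x : X) (W : Submodule ℂ (X → ℂ)) : Prop :=
  S.IsTSub x W ∧ W ≠ ⊥ ∧ ∀ W' ≤ W, S.IsTSub x W' → W' = ⊥ ∨ W' = W

/-- The support `W_s = { i : E_i^*(x) W ≠ 0 }` of a module. -/
def supp (S : AssocScheme X D) (x : X) (W : Submodule ℂ (X → ℂ)) : Set ℕ :=
  {i : ℕ | i ≤ D ∧ Submodule.map (S.Estar x i).mulVecLin W ≠ ⊥}

/-- The dual support `W_s^* = { j : E_j W ≠ 0 }` of a module. -/
def dualSupp (S : AssocScheme X D) (W : Submodule ℂ (X → ℂ)) : Set ℕ :=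
  {j : ℕ | j ≤ D ∧ Submodule.map (S.EM j).mulVecLin W ≠ ⊥}

/-- The endpoint `r(W) = min { i : E_i^*(x) W ≠ 0 }`. -/
def endpoint (S : AssocScheme X D) (x : X) (W : Submodule ℂ (X → ℂ)) : ℕ :=
  sInf (S.supp x W)

/-- The dual endpoint `r^*(W) = min { j : E_j W ≠ 0 }`. -/
def dualEndpoint (S : AssocScheme X D) (W : Submodule ℂ (X → ℂ)) : ℕ :=
  sInf (S.dualSupp W)

/-- The diameter `d(W) = |W_s| - 1`. -/
def diam (S : AssocScheme X D) (x : X) (W : Submodule ℂ (X → ℂ)) : ℕ :=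
  (S.supp x W).ncard - 1

/-- The dual diameter `d^*(W) = |W_s^*| - 1`. -/
def dualDiam (S : AssocScheme X D) (W : Submodule ℂ (X → ℂ)) : ℕ :=
  (S.dualSupp W).ncard - 1

/-- `W` is thin: `dim E_i^*(x) W ≤ 1` for all `i`. -/
def IsThin (S : AssocScheme X D) (x : X) (W : Submodule ℂ (X → ℂ)) : Prop :=
  ∀ i : ℕ, Module.finrank ℂ (Submodule.map (S.Estar x i).mulVecLin W) ≤ 1

/-- `W` is dual thin: `dim E_j W ≤ 1` for all `j`. -/
def IsDualThin (S : AssocScheme X D) (W : Submodule ℂ (X → ℂ)) : Prop :=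
  ∀ j : ℕ, Module.finrank ℂ (Submodule.map (S.EM j).mulVecLin W) ≤ 1

/-- The displacement `η(W) = r(W) + r^*(W) + d(W) - D` (as an integer). -/
def disp (S : AssocScheme X D) (x : X) (W : Submodule ℂ (X → ℂ)) : ℤ :=
  (S.endpoint x W : ℤ) + (S.dualEndpoint W : ℤ) + (S.diam x W : ℤ) - (D : ℤ)

/-- `V_0`: the span of the irreducible `T(x)`-modules of displacement zero. -/
def V0 (S : AssocScheme X D) (x : X) : Submodule ℂ (X → ℂ) :=
  ⨆ (W : Submodule ℂ (X → ℂ)) (_ : S.IsIrr x W ∧ S.disp x W = 0), W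

/-- The split-decomposition subspace `V_{ij} = (Σ_{k ≤ i} E_k^* V) ∩ (Σ_{ℓ ≤ j} E_ℓ V)`. -/
def Vij (S : AssocScheme X D) (x : X) (i j : ℕ) : Submodule ℂ (X → ℂ) :=
  (⨆ k ∈ Finset.range (i + 1), S.EstarSp x k) ⊓ (⨆ l ∈ Finset.range (j + 1), S.ESp l)

/-- The primary module `M x̂`. -/
def primary (S : AssocScheme X D) (x : X) : Submodule ℂ (X → ℂ) :=
  Submodule.span ℂ (Set.range fun i : Fin (D + 1) => (S.A i).mulVec (xhat x))

/-- The graph `(X, R_1)` is bipartite. -/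
def IsBipartiteGraph (S : AssocScheme X D) : Prop :=
  ∃ f : X → Bool, ∀ x y : X, S.A 1 x y ≠ 0 → f x ≠ f y

/-- `Y` is a bipartite half: one colour class of a proper 2-colouring of `(X, R_1)`. -/
def IsBipartiteHalf (S : AssocScheme X D) (Y : Finset X) : Prop :=
  ∃ f : X → Bool, (∀ x y : X, S.A 1 x y ≠ 0 → f x ≠ f y) ∧ (Y : Set X) = {x | f x = true}

/-- The scheme is antipodal: `R_0 ∪ R_D` is an equivalence relation. -/
def IsAntipodal (S : AssocScheme X D) : Prop :=
  ∀ x y z : X, y ≠ z → S.AM D x y ≠ 0 → S.AM D x z ≠ 0 → S.AM D y z ≠ 0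

/-- The scheme is an antipodal double cover: antipodal with fibres of size two. -/
def IsAntipodalDoubleCover (S : AssocScheme X D) : Prop :=
  S.IsAntipodal ∧ ∀ x : X, ∃! y : X, S.AM D x y ≠ 0

/-- The scheme is that of an ordinary cycle: the graph `(X, R_1)` has valency two. -/
def IsOrdinaryCycle (S : AssocScheme X D) : Prop :=
  ∀ x : X, {y : X | S.A 1 x y ≠ 0}.ncard = 2

end AssocScheme
set_option linter.unusedSectionVars false

namespace AssocScheme
variable {X : Type*} [Fintype X] [DecidableEq X] {D : ℕ}

section Lemmas
variable (S : AssocScheme X D) (x : X)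

lemma AM_cases (i : ℕ) (y z : X) : S.AM i y z = 0 ∨ S.AM i y z = 1 := by
  unfold AM; split
  · exact S.A_entries _ y z
  · left; rfl

lemma AM_symm' (i : ℕ) (y z : X) : S.AM i y z = S.AM i z y := by
  unfold AM; split
  · exact (S.A_symm ⟨i, by omega⟩).apply z y
  · rfl

lemma AM_conj (i : ℕ) (y z : X) : (starRingEnd ℂ) (S.AM i y z) = S.AM i y z := by
  rcases S.AM_cases i y z with h | h <;> rw [h] <;> simp

lemma AM_gt (i : ℕ) (hi : D < i) : S.AM i = 0 := by
  unfold AM; rw [dif_neg]; omega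

lemma AM_zero : S.AM 0 = 1 := by
  unfold AM; rw [dif_pos (by omega)]; exact S.A_zero

lemma entry_sum_one (y z : X) : ∑ i : Fin (D+1), S.A i y z = 1 := by
  have := congrFun (congrFun S.A_sum y) z
  simpa [Matrix.sum_apply] using this

lemma entry_disjoint {i j : ℕ} (hij : i ≠ j) (y z : X) :
    S.AM i y z * S.AM j y z = 0 := by
  rcases le_or_gt i D with hi | hi
  swap
  · rw [S.AM_gt i hi]; simp
  rcases le_or_gt j D with hj | hj
  swap
  · rw [S.AM_gt j hj]; simp
  rcases S.AM_cases i y z with h1 | h1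
  · rw [h1]; ring
  rcases S.AM_cases j y z with h2 | h2
  · rw [h2]; ring
  exfalso
  have hsum : ∑ k : Fin (D+1), S.A k y z = 1 := S.entry_sum_one y z
  -- real parts
  have hre : ∑ k : Fin (D+1), (S.A k y z).re = 1 := by
    have := congrArg Complex.re hsum
    simpa [Complex.re_sum] using this
  have hnonneg : ∀ k : Fin (D+1), (0:ℝ) ≤ (S.A k y z).re := by
    intro k; rcases S.A_entries k y z with h | h <;> rw [h] <;> simp
  have hone : ∀ k : Fin (D+1), (S.A k y z).re ≤ 1 := by
    intro k; rcases S.A_entries k y z with h | h <;> rw [h] <;> simp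
  set i' : Fin (D+1) := ⟨i, by omega⟩
  set j' : Fin (D+1) := ⟨j, by omega⟩
  have hij' : i' ≠ j' := by
    intro hE; apply hij; exact congrArg Fin.val hE
  have hi1 : (S.A i' y z).re = 1 := by
    have : S.AM i y z = S.A i' y z := by unfold AM; rw [dif_pos (by omega)]
    rw [← this, h1]; simp
  have hj1 : (S.A j' y z).re = 1 := by
    have : S.AM j y z = S.A j' y z := by unfold AM; rw [dif_pos (by omega)]
    rw [← this, h2]; simp
  have h2le : (2:ℝ) ≤ ∑ k : Fin (D+1), (S.A k y z).re := by
    have := Finset.add_sum_erase Finset.univ (fun k => (S.A k y z).re) (Finset.mem_univ i')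
    have hj'mem : j' ∈ Finset.univ.erase i' := Finset.mem_erase.2 ⟨hij'.symm, Finset.mem_univ _⟩
    have := Finset.add_sum_erase _ (fun k => (S.A k y z).re) hj'mem
    calc (2:ℝ) = 1 + 1 + 0 := by ring
    _ ≤ (S.A i' y z).re + (S.A j' y z).re + ∑ k ∈ (Finset.univ.erase i').erase j', (S.A k y z).re := by
        rw [hi1, hj1]
        gcongr
        exact Finset.sum_nonneg fun k _ => hnonneg k
    _ = ∑ k : Fin (D+1), (S.A k y z).re := by
        rw [add_assoc, Finset.add_sum_erase _ (fun k => (S.A k y z).re) hj'mem,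
          Finset.add_sum_erase _ (fun k => (S.A k y z).re) (Finset.mem_univ i')]
  rw [hre] at h2le; linarith

lemma Estar_mul_ne {i j : ℕ} (hij : i ≠ j) : S.Estar x i * S.Estar x j = 0 := by
  unfold Estar
  rw [Matrix.diagonal_mul_diagonal]
  have : (fun y => S.AM i x y * S.AM j x y) = fun _ => (0:ℂ) := by
    funext y; exact S.entry_disjoint hij x y
  rw [this, Matrix.diagonal_zero]

lemma Estar_idem (i : ℕ) : S.Estar x i * S.Estar x i = S.Estar x i := by
  unfold Estar
  rw [Matrix.diagonal_mul_diagonal]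
  have : (fun y => S.AM i x y * S.AM i x y) = fun y => S.AM i x y := by
    funext y; rcases S.AM_cases i x y with h | h <;> rw [h] <;> ring
  rw [this]

lemma Estar_gt {i : ℕ} (hi : D < i) : S.Estar x i = 0 := by
  unfold Estar; rw [S.AM_gt i hi]; simp

lemma decomp (v : X → ℂ) : v = ∑ i : Fin (D+1), (S.Estar x (i:ℕ)).mulVec v := by
  funext y
  have h1 : ∀ i : Fin (D+1), ((S.Estar x (i:ℕ)).mulVec v) y = S.AM (i:ℕ) x y * v y := by
    intro i; exact Matrix.mulVec_diagonal _ _ _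
  rw [Finset.sum_apply]
  calc v y = (∑ i : Fin (D+1), S.AM (i:ℕ) x y) * v y := by
        have : ∑ i : Fin (D+1), S.AM (i:ℕ) x y = 1 := by
          have h2 : ∀ i : Fin (D+1), S.AM (i:ℕ) x y = S.A i x y := by
            intro i; unfold AM; rw [dif_pos i.isLt]
          rw [Finset.sum_congr rfl fun i _ => h2 i, S.entry_sum_one]
        rw [this, one_mul]
  _ = ∑ i : Fin (D+1), S.AM (i:ℕ) x y * v y := by rw [Finset.sum_mul]
  _ = ∑ i : Fin (D+1), ((S.Estar x (i:ℕ)).mulVec v) y := by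
        exact Finset.sum_congr rfl fun i _ => (h1 i).symm

end Lemmas

end AssocScheme

section DotcLemmas
variable {X : Type*} [Fintype X] [DecidableEq X]

lemma dotc_add_right (u v w : X → ℂ) : dotc u (v + w) = dotc u v + dotc u w := by
  unfold dotc; rw [← Finset.sum_add_distrib]
  apply Finset.sum_congr rfl; intro y _; simp [mul_add]

lemma dotc_zero_right (u : X → ℂ) : dotc u 0 = 0 := by
  unfold dotc; simp

lemma dotc_smul_right (c : ℂ) (u v : X → ℂ) :
    dotc u (c • v) = (starRingEnd ℂ) c * dotc u v := by
  unfold dotc; rw [Finset.mul_sum]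
  apply Finset.sum_congr rfl; intro y _; simp [mul_comm, mul_assoc, mul_left_comm]

lemma dotc_smul_left (c : ℂ) (u v : X → ℂ) : dotc (c • u) v = c * dotc u v := by
  unfold dotc; rw [Finset.mul_sum]
  apply Finset.sum_congr rfl; intro y _; simp [mul_assoc]

lemma dotc_sum_right {ι : Type*} (s : Finset ι) (u : X → ℂ) (f : ι → X → ℂ) :
    dotc u (∑ i ∈ s, f i) = ∑ i ∈ s, dotc u (f i) := by
  classical
  induction s using Finset.induction_on with
  | empty => simp [dotc_zero_right]
  | insert a s' h ih =>
                   rw [Finset.sum_insert h, Finset.sum_insert h, dotc_add_right, ih]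

lemma dotc_mulVec_comm (A : Matrix X X ℂ) (hA : ∀ y z, (starRingEnd ℂ) (A y z) = A z y)
    (u v : X → ℂ) : dotc u (A.mulVec v) = dotc (A.mulVec u) v := by
  unfold dotc Matrix.mulVec dotProduct
  have : ∀ y, (starRingEnd ℂ) (∑ z, A y z * v z) = ∑ z, A z y * (starRingEnd ℂ) (v z) := by
    intro y
    rw [map_sum]
    apply Finset.sum_congr rfl; intro z _
    rw [_root_.map_mul, hA]
  calc ∑ y, u y * (starRingEnd ℂ) (∑ z, A y z * v z)
      = ∑ y, ∑ z, u y * (A z y * (starRingEnd ℂ) (v z)) := by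
        apply Finset.sum_congr rfl; intro y _; rw [this, Finset.mul_sum]
  _ = ∑ z, ∑ y, u y * (A z y * (starRingEnd ℂ) (v z)) := Finset.sum_comm
  _ = ∑ z, (∑ y, A z y * u y) * (starRingEnd ℂ) (v z) := by
        apply Finset.sum_congr rfl; intro z _
        rw [Finset.sum_mul]
        apply Finset.sum_congr rfl; intro y _; ring

end DotcLemmas

lemma mulVec_sum' {X : Type*} [Fintype X] {ι : Type*} (A : Matrix X X ℂ) (s : Finset ι)
    (f : ι → X → ℂ) : A.mulVec (∑ i ∈ s, f i) = ∑ i ∈ s, A.mulVec (f i) := by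
  classical
  induction s using Finset.induction_on with
  | empty => simp [Matrix.mulVec_zero]
  | insert a s' h ih =>
                   rw [Finset.sum_insert h, Finset.sum_insert h, Matrix.mulVec_add, ih]

namespace AssocScheme
variable {X : Type*} [Fintype X] [DecidableEq X] {D : ℕ} (S : AssocScheme X D) (x : X)

lemma A_mem_Talg (i : Fin (D+1)) : S.A i ∈ S.Talg x :=
  Algebra.subset_adjoin (Or.inl ⟨i, rfl⟩)

lemma Estar_mem_Talg (i : ℕ) : S.Estar x i ∈ S.Talg x := by
  rcases le_or_gt i D with hi | hi
  · exact Algebra.subset_adjoin (Or.inr ⟨⟨i, by omega⟩, rfl⟩)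
  · rw [S.Estar_gt x hi]; exact Subalgebra.zero_mem _

lemma AM_mem_Talg (i : ℕ) : S.AM i ∈ S.Talg x := by
  unfold AM; split
  · exact S.A_mem_Talg x _
  · exact Subalgebra.zero_mem _

lemma pow_A1_comb (j : ℕ) : ∃ c : Fin (D+1) → ℂ, (S.A 1)^j = ∑ l, c l • S.A l := by
  induction j with
  | zero =>
    refine ⟨fun l => if l = 0 then 1 else 0, ?_⟩
    rw [pow_zero, ← S.A_zero, Finset.sum_eq_single 0]
    · simp
    · intro b _ hb; simp [hb]
    · simp
  | succ j ih =>
    obtain ⟨c, hc⟩ := ih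
    choose p hp using fun l => S.A_mul_closed 1 l
    refine ⟨fun m => ∑ l, c l * p l m, ?_⟩
    rw [pow_succ', hc, Finset.mul_sum]
    calc ∑ l, S.A 1 * (c l • S.A l) = ∑ l, c l • (S.A 1 * S.A l) := by
          apply Finset.sum_congr rfl; intro l _; rw [Matrix.mul_smul]
    _ = ∑ l, c l • (∑ m, p l m • S.A m) := by
          apply Finset.sum_congr rfl; intro l _; rw [hp l]
    _ = ∑ l, ∑ m, (c l * p l m) • S.A m := by
          apply Finset.sum_congr rfl; intro l _
          rw [Finset.smul_sum]
          apply Finset.sum_congr rfl; intro m _; rw [smul_smul]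
    _ = ∑ m, (∑ l, c l * p l m) • S.A m := by
          rw [Finset.sum_comm]
          apply Finset.sum_congr rfl; intro m _
          rw [Finset.sum_smul]

lemma Estar_kill_sp {i j : ℕ} (hij : i ≠ j) {u : X → ℂ} (hu : u ∈ S.EstarSp x j) :
    (S.Estar x i).mulVec u = 0 := by
  obtain ⟨w, rfl⟩ := hu
  rw [Matrix.mulVecLin_apply, Matrix.mulVec_mulVec, S.Estar_mul_ne x hij, Matrix.zero_mulVec]

lemma Estar_kill_sup {a b c i : ℕ} {v : X → ℂ}
    (hv : v ∈ S.EstarSp x a ⊔ S.EstarSp x b ⊔ S.EstarSp x c)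
    (ha : i ≠ a) (hb : i ≠ b) (hc : i ≠ c) :
    (S.Estar x i).mulVec v = 0 := by
  rcases Submodule.mem_sup.1 hv with ⟨p, hp, q, hq, rfl⟩
  rcases Submodule.mem_sup.1 hp with ⟨p1, hp1, p2, hp2, rfl⟩
  rw [Matrix.mulVec_add, Matrix.mulVec_add, S.Estar_kill_sp x ha hp1,
    S.Estar_kill_sp x hb hp2, S.Estar_kill_sp x hc hq]
  simp

lemma comp_vanish (hS : S.IsMetric) {i j : ℕ} (hij : j + 1 < i) (v : X → ℂ) :
    (S.Estar x i).mulVec ((S.A 1).mulVec ((S.Estar x j).mulVec v)) = 0 := by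
  have h1 : (S.Estar x j).mulVec v ∈ S.EstarSp x j := ⟨v, Matrix.mulVecLin_apply _ _⟩
  exact S.Estar_kill_sup x (hS.2 x j _ h1) (by omega) (by omega) (by omega)

lemma map_mulVecLin_eq_bot_iff (M : Matrix X X ℂ) (W : Submodule ℂ (X → ℂ)) :
    Submodule.map M.mulVecLin W = ⊥ ↔ ∀ u ∈ W, M.mulVec u = 0 := by
  rw [Submodule.eq_bot_iff]
  constructor
  · intro h u hu
    have := h (M.mulVecLin u) (Submodule.mem_map.2 ⟨u, hu, rfl⟩)
    rwa [Matrix.mulVecLin_apply] at this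
  · rintro h v hv
    obtain ⟨u, hu, rfl⟩ := Submodule.mem_map.1 hv
    rw [Matrix.mulVecLin_apply]
    exact h u hu

lemma exists_adj (hS : S.IsMetric) {W : Submodule ℂ (X → ℂ)} (hW : S.IsIrr x W) (k : ℕ)
    (hk : Submodule.map (S.Estar x k).mulVecLin W ≠ ⊥)
    (hm : ∃ m, k < m ∧ Submodule.map (S.Estar x m).mulVecLin W ≠ ⊥) :
    ∃ u ∈ W, (S.Estar x (k+1)).mulVec ((S.A 1).mulVec ((S.Estar x k).mulVec u)) ≠ 0 := by
  by_contra hcon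
  push_neg at hcon
  obtain ⟨hT, hne, hirr⟩ := hW
  set W' : Submodule ℂ (X → ℂ) :=
    { carrier := {w | w ∈ W ∧ ∀ j, k < j → (S.Estar x j).mulVec w = 0}
      add_mem' := by
        rintro a b ⟨haW, ha⟩ ⟨hbW, hb⟩
        exact ⟨W.add_mem haW hbW, fun j hj => by
          rw [Matrix.mulVec_add, ha j hj, hb j hj, add_zero]⟩
      zero_mem' := ⟨W.zero_mem, fun j _ => Matrix.mulVec_zero _⟩
      smul_mem' := by
        rintro c a ⟨haW, ha⟩
        exact ⟨W.smul_mem c haW, fun j hj => by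
          rw [Matrix.mulVec_smul, ha j hj, smul_zero]⟩ } with hW'def
  have hmem : ∀ v : X → ℂ, v ∈ W' ↔ v ∈ W ∧ ∀ j, k < j → (S.Estar x j).mulVec v = 0 :=
    fun v => Iff.rfl
  have hA1 : ∀ v ∈ W', (S.A 1).mulVec v ∈ W' := by
    intro v hv
    obtain ⟨hvW, hvz⟩ := (hmem v).1 hv
    refine (hmem _).2 ⟨hT _ (S.A_mem_Talg x 1) v hvW, ?_⟩
    intro j hj
    conv_lhs => rw [S.decomp x v]
    rw [mulVec_sum', mulVec_sum']
    apply Finset.sum_eq_zero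
    intro i _
    rcases lt_trichotomy (i : ℕ) k with hik | hik | hik
    · exact S.comp_vanish x hS (by omega) v
    · rcases eq_or_lt_of_le (Nat.succ_le_of_lt hj) with hj1 | hj1
      · rw [hik, ← hj1]
        exact hcon v hvW
      · exact S.comp_vanish x hS (by omega) v
    · rw [hvz _ hik, Matrix.mulVec_zero, Matrix.mulVec_zero]
  have hEst : ∀ (i : ℕ), ∀ v ∈ W', (S.Estar x i).mulVec v ∈ W' := by
    intro i v hv
    obtain ⟨hvW, hvz⟩ := (hmem v).1 hv
    refine (hmem _).2 ⟨hT _ (S.Estar_mem_Talg x i) v hvW, ?_⟩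
    intro j hj
    rw [Matrix.mulVec_mulVec]
    by_cases hji : j = i
    · subst hji
      rw [S.Estar_idem]
      exact hvz j hj
    · rw [S.Estar_mul_ne x hji, Matrix.zero_mulVec]
  have hAdj : ∀ F ∈ Algebra.adjoin ℂ {S.A 1}, ∀ v ∈ W', F.mulVec v ∈ W' := by
    intro F hF
    refine Algebra.adjoin_induction (p := fun F _ => ∀ v ∈ W', F.mulVec v ∈ W')
      ?_ ?_ ?_ ?_ hF
    · intro G hG
      rw [Set.mem_singleton_iff] at hG
      subst hG
      exact hA1
    · intro r v hv
      rw [Algebra.algebraMap_eq_smul_one, Matrix.smul_mulVec, Matrix.one_mulVec]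
      exact W'.smul_mem r hv
    · intro F G _ _ ihF ihG v hv
      rw [Matrix.add_mulVec]
      exact W'.add_mem (ihF v hv) (ihG v hv)
    · intro F G _ _ ihF ihG v hv
      rw [← Matrix.mulVec_mulVec]
      exact ihF _ (ihG v hv)
  have hTstab : S.IsTSub x W' := by
    intro F hF
    refine Algebra.adjoin_induction (p := fun F _ => ∀ v ∈ W', F.mulVec v ∈ W')
      ?_ ?_ ?_ ?_ hF
    · rintro G (⟨i, rfl⟩ | ⟨i, rfl⟩)
      · exact hAdj _ (hS.1 i)
      · exact hEst (i : ℕ)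
    · intro r v hv
      rw [Algebra.algebraMap_eq_smul_one, Matrix.smul_mulVec, Matrix.one_mulVec]
      exact W'.smul_mem r hv
    · intro F G _ _ ihF ihG v hv
      rw [Matrix.add_mulVec]
      exact W'.add_mem (ihF v hv) (ihG v hv)
    · intro F G _ _ ihF ihG v hv
      rw [← Matrix.mulVec_mulVec]
      exact ihF _ (ihG v hv)
  have hbot : W' ≠ ⊥ := by
    rw [Ne, Submodule.eq_bot_iff]
    intro hall
    apply hk
    rw [map_mulVecLin_eq_bot_iff]
    intro u hu
    apply hall
    refine (hmem _).2 ⟨hT _ (S.Estar_mem_Talg x k) u hu, ?_⟩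
    intro j hj
    rw [Matrix.mulVec_mulVec, S.Estar_mul_ne x (by omega), Matrix.zero_mulVec]
  have hnW : W' ≠ W := by
    obtain ⟨m, hkm, hmb⟩ := hm
    intro hEq
    apply hmb
    rw [map_mulVecLin_eq_bot_iff]
    intro u hu
    have : u ∈ W' := hEq ▸ hu
    exact ((hmem u).1 this).2 m hkm
  rcases hirr W' (fun v hv => ((hmem v).1 hv).1) hTstab with h | h
  · exact hbot h
  · exact hnW h

lemma nogap (hS : S.IsMetric) {W : Submodule ℂ (X → ℂ)} (hW : S.IsIrr x W) (k : ℕ)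
    (hk : Submodule.map (S.Estar x k).mulVecLin W ≠ ⊥)
    (hm : ∃ m, k < m ∧ Submodule.map (S.Estar x m).mulVecLin W ≠ ⊥) :
    Submodule.map (S.Estar x (k+1)).mulVecLin W ≠ ⊥ := by
  obtain ⟨u, huW, hune⟩ := S.exists_adj x hS hW k hk hm
  intro hb
  apply hune
  rw [map_mulVecLin_eq_bot_iff] at hb
  exact hb _ (hW.1 _ (S.A_mem_Talg x 1) _ (hW.1 _ (S.Estar_mem_Talg x k) u huW))

end AssocScheme

lemma sum_mulVec' {X : Type*} [Fintype X] {ι : Type*} (s : Finset ι) (f : ι → Matrix X X ℂ)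
    (v : X → ℂ) : (∑ i ∈ s, f i).mulVec v = ∑ i ∈ s, (f i).mulVec v := by
  classical
  induction s using Finset.induction_on with
  | empty => simp [Matrix.zero_mulVec]
  | insert a s' h ih =>
                   rw [Finset.sum_insert h, Finset.sum_insert h, Matrix.add_mulVec, ih]

lemma mem_smul_of_finrank_le_one {X : Type*} [Fintype X] {p : Submodule ℂ (X → ℂ)}
    (hp : Module.finrank ℂ p ≤ 1) {y v : X → ℂ} (hy : y ∈ p) (hy0 : y ≠ 0) (hv : v ∈ p) :
    ∃ c : ℂ, v = c • y := by
  have hle : Submodule.span ℂ {y} ≤ p := Submodule.span_le.2 (Set.singleton_subset_iff.2 hy)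
  have heq : Submodule.span ℂ {y} = p :=
    Submodule.eq_of_le_of_finrank_le hle (by rw [finrank_span_singleton hy0]; exact hp)
  rw [← heq] at hv
  obtain ⟨c, hc⟩ := Submodule.mem_span_singleton.1 hv
  exact ⟨c, hc.symm⟩




open AssocScheme in
/-- In a metric symmetric association scheme, suppose every irreducible
`T(x)`-module with endpoint at most `t` is thin.  If `A_ℓ χ` is a relative `t`-codesign
with respect to `x` for all `0 ≤ ℓ ≤ D`, then `χ` is orthogonal to every irreducible
`T(x)`-module `W` with `1 ≤ r(W) ≤ t`. -/
theorem codesign_characterization_thin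
    {X : Type*} [Fintype X] [DecidableEq X] {D : ℕ}
    (S : AssocScheme X D) (hS : S.IsMetric) (x : X) (χ : X → ℂ) (t : ℕ)
    (hthin : ∀ W : Submodule ℂ (X → ℂ), S.IsIrr x W → S.endpoint x W ≤ t → S.IsThin x W)
    (h : ∀ l : Fin (D + 1), S.RelCodesign x t ((S.A l).mulVec χ)) :
    ∀ W : Submodule ℂ (X → ℂ), S.IsIrr x W →
      1 ≤ S.endpoint x W → S.endpoint x W ≤ t → ∀ w ∈ W, dotc χ w = 0 := by
  intro W hW hr1 hrt w hw
  -- support nonempty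
  have hsne : (S.supp x W).Nonempty := by
    obtain ⟨w0, hw0W, hw0⟩ := (Submodule.ne_bot_iff W).1 hW.2.1
    by_contra hemp
    rw [Set.not_nonempty_iff_eq_empty] at hemp
    apply hw0
    have hterm : ∀ i : Fin (D+1), (S.Estar x (i:ℕ)).mulVec w0 = 0 := by
      intro i
      have hb : Submodule.map (S.Estar x (i:ℕ)).mulVecLin W = ⊥ := by
        by_contra hne
        have hmem : (i:ℕ) ∈ S.supp x W := ⟨by omega, hne⟩
        rw [hemp] at hmem
        exact hmem
      exact (map_mulVecLin_eq_bot_iff _ _).1 hb w0 hw0W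
    calc w0 = ∑ i : Fin (D+1), (S.Estar x (i:ℕ)).mulVec w0 := S.decomp x w0
    _ = 0 := Finset.sum_eq_zero fun i _ => hterm i
  have hrmem : S.endpoint x W ∈ S.supp x W := Nat.sInf_mem hsne
  set r := S.endpoint x W with hrdef
  have hrD : r ≤ D := hrmem.1
  have hrne : Submodule.map (S.Estar x r).mulVecLin W ≠ ⊥ := hrmem.2
  have hsupp_le : ∀ j : ℕ, Submodule.map (S.Estar x j).mulVecLin W ≠ ⊥ → r ≤ j ∧ j ≤ D := by
    intro j hj
    have hjD : j ≤ D := by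
      by_contra hD
      apply hj
      rw [map_mulVecLin_eq_bot_iff]
      intro u _
      rw [S.Estar_gt x (by omega), Matrix.zero_mulVec]
    exact ⟨Nat.sInf_le ⟨hjD, hj⟩, hjD⟩
  have h0 : Submodule.map (S.Estar x 0).mulVecLin W = ⊥ := by
    by_contra hne
    have := (hsupp_le 0 hne).1
    omega
  have keyx : ∀ v ∈ W, v x = 0 := by
    intro v hv
    have h1 : (S.Estar x 0).mulVec v = 0 := (map_mulVecLin_eq_bot_iff _ _).1 h0 v hv
    have h2 : ((Matrix.diagonal fun y => S.AM 0 x y).mulVec v) x = 0 := congrFun h1 x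
    rw [Matrix.mulVec_diagonal] at h2
    simp only [S.AM_zero] at h2
    simpa [Matrix.one_apply_eq] using h2
  have stabA1 : ∀ v ∈ W, (S.A 1).mulVec v ∈ W := fun v hv => hW.1 _ (S.A_mem_Talg x 1) v hv
  have stabE : ∀ (i : ℕ), ∀ v ∈ W, (S.Estar x i).mulVec v ∈ W :=
    fun i v hv => hW.1 _ (S.Estar_mem_Talg x i) v hv
  have stabA1pow : ∀ (j : ℕ), ∀ v ∈ W, ((S.A 1)^j).mulVec v ∈ W := by
    intro j
    induction j with
    | zero => intro v hv; rwa [pow_zero, Matrix.one_mulVec]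
    | succ j ih =>
      intro v hv
      rw [pow_succ', ← Matrix.mulVec_mulVec]
      exact stabA1 _ (ih v hv)
  -- orthogonality from the codesign hypothesis
  have orth0 : ∀ (l : Fin (D+1)) (i : ℕ), 1 ≤ i → i ≤ t → ∀ v ∈ W,
      dotc χ ((S.A l).mulVec ((S.Estar x i).mulVec v)) = 0 := by
    intro l i hi1 hit v hv
    obtain ⟨c, hc⟩ := h l i hi1 hit
    have hAconj : ∀ y z, (starRingEnd ℂ) (S.A l y z) = S.A l z y := by
      intro y z
      have h1 : (starRingEnd ℂ) (S.A l y z) = S.A l y z := by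
        rcases S.A_entries l y z with he | he <;> rw [he] <;> simp
      rw [h1]
      exact (S.A_symm l).apply z y
    have hEconj : ∀ y z, (starRingEnd ℂ) (S.Estar x i y z) = S.Estar x i z y := by
      intro y z
      by_cases hyz : y = z
      · subst hyz
        show (starRingEnd ℂ) ((Matrix.diagonal fun y' => S.AM i x y') y y)
            = (Matrix.diagonal fun y' => S.AM i x y') y y
        rw [Matrix.diagonal_apply_eq]
        exact S.AM_conj i x y
      · show (starRingEnd ℂ) ((Matrix.diagonal fun y' => S.AM i x y') y z)
            = (Matrix.diagonal fun y' => S.AM i x y') z y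
        rw [Matrix.diagonal_apply_ne _ hyz, Matrix.diagonal_apply_ne _ (Ne.symm hyz)]
        simp
    have hxhat_same : xhat x x = 1 := Pi.single_eq_same x 1
    have hxhat_ne : ∀ b, b ≠ x → xhat x b = 0 := fun b hb => Pi.single_eq_of_ne hb 1
    have hsingle : ∀ y, (S.AM i).mulVec (xhat x) y = S.AM i x y := by
      intro y
      show ∑ z, S.AM i y z * xhat x z = S.AM i x y
      rw [Finset.sum_eq_single x]
      · rw [hxhat_same, mul_one]
        exact S.AM_symm' i y x
      · intro b _ hb
        rw [hxhat_ne b hb, mul_zero]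
      · intro hx
        exact absurd (Finset.mem_univ x) hx
    have hx0 : ((S.AM i).mulVec v) x = 0 := by
      rcases le_or_gt i D with hiD | hiD
      · exact keyx _ (hW.1 _ (S.AM_mem_Talg x i) v hv)
      · rw [S.AM_gt i hiD, Matrix.zero_mulVec]
        rfl
    have hz : dotc ((S.AM i).mulVec (xhat x)) v = (starRingEnd ℂ) (((S.AM i).mulVec v) x) := by
      show ∑ y, (S.AM i).mulVec (xhat x) y * (starRingEnd ℂ) (v y)
          = (starRingEnd ℂ) (∑ y, S.AM i x y * v y)
      rw [map_sum]
      apply Finset.sum_congr rfl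
      intro y _
      rw [hsingle y, _root_.map_mul, S.AM_conj]
    calc dotc χ ((S.A l).mulVec ((S.Estar x i).mulVec v))
        = dotc ((S.A l).mulVec χ) ((S.Estar x i).mulVec v) := dotc_mulVec_comm _ hAconj _ _
    _ = dotc ((S.Estar x i).mulVec ((S.A l).mulVec χ)) v := dotc_mulVec_comm _ hEconj _ _
    _ = dotc (c • (S.AM i).mulVec (xhat x)) v := by rw [hc]
    _ = c * dotc ((S.AM i).mulVec (xhat x)) v := dotc_smul_left _ _ _
    _ = 0 := by rw [hz, hx0, map_zero, mul_zero]
  have orthpow : ∀ (j : ℕ) (i : ℕ), 1 ≤ i → i ≤ t → ∀ v ∈ W,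
      dotc χ (((S.A 1)^j).mulVec ((S.Estar x i).mulVec v)) = 0 := by
    intro j i hi1 hit v hv
    obtain ⟨c, hc⟩ := S.pow_A1_comb j
    rw [hc]
    have hexp : (∑ l, c l • S.A l).mulVec ((S.Estar x i).mulVec v)
        = ∑ l, c l • (S.A l).mulVec ((S.Estar x i).mulVec v) := by
      rw [sum_mulVec']
      exact Finset.sum_congr rfl fun l _ => Matrix.smul_mulVec _ _ _
    rw [hexp, dotc_sum_right]
    apply Finset.sum_eq_zero
    intro l _
    rw [dotc_smul_right, orth0 l i hi1 hit v hv, mul_zero]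
  -- a nonzero vector in E_r^* W
  obtain ⟨wr0, hwr0mem, hwr0ne⟩ := (Submodule.ne_bot_iff _).1 hrne
  obtain ⟨u0, hu0W, hu0eq⟩ := Submodule.mem_map.1 hwr0mem
  set wr : X → ℂ := (S.Estar x r).mulVec u0 with hwrdef
  have hwrne : wr ≠ 0 := by
    rw [hwrdef, ← Matrix.mulVecLin_apply, hu0eq]
    exact hwr0ne
  have hwrW : wr ∈ W := stabE r u0 hu0W
  have hwrsp : ∀ i : ℕ, i ≠ r → (S.Estar x i).mulVec wr = 0 := by
    intro i hir
    rw [hwrdef, Matrix.mulVec_mulVec, S.Estar_mul_ne x hir, Matrix.zero_mulVec]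
  have L1 : ∀ (m : ℕ) (i : ℕ), r + m < i →
      (S.Estar x i).mulVec (((S.A 1)^m).mulVec wr) = 0 := by
    intro m
    induction m with
    | zero =>
      intro i hi
      rw [pow_zero, Matrix.one_mulVec]
      exact hwrsp i (by omega)
    | succ m ih =>
      intro i hi
      rw [pow_succ', ← Matrix.mulVec_mulVec]
      conv_lhs => rw [S.decomp x (((S.A 1)^m).mulVec wr)]
      rw [mulVec_sum', mulVec_sum']
      apply Finset.sum_eq_zero
      intro k _
      rcases lt_trichotomy (k:ℕ) (r+m) with hk | hk | hk
      · exact S.comp_vanish x hS (by omega) _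
      · exact S.comp_vanish x hS (by omega) _
      · rw [ih _ hk, Matrix.mulVec_zero, Matrix.mulVec_zero]
  set y : ℕ → (X → ℂ) := fun m => (S.Estar x (r+m)).mulVec (((S.A 1)^m).mulVec wr) with hydef
  have hyW : ∀ m, ((S.A 1)^m).mulVec wr ∈ W := fun m => stabA1pow m wr hwrW
  have hymem : ∀ m, y m ∈ Submodule.map (S.Estar x (r+m)).mulVecLin W :=
    fun m => Submodule.mem_map.2 ⟨_, hyW m, Matrix.mulVecLin_apply _ _⟩
  have yrec : ∀ m, r + m ≤ D → y (m+1) = (S.Estar x (r+m+1)).mulVec ((S.A 1).mulVec (y m)) := by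
    intro m hmD
    show (S.Estar x (r+(m+1))).mulVec (((S.A 1)^(m+1)).mulVec wr) = _
    rw [pow_succ', ← Matrix.mulVec_mulVec]
    conv_lhs => rw [S.decomp x (((S.A 1)^m).mulVec wr)]
    rw [mulVec_sum', mulVec_sum']
    rw [Finset.sum_eq_single (⟨r+m, by omega⟩ : Fin (D+1))]
    · rfl
    · intro b _ hb
      have hbne : (b:ℕ) ≠ r + m := by
        intro hbe
        exact hb (Fin.ext hbe)
      rcases lt_or_gt_of_ne hbne with hbm | hbm
      · exact S.comp_vanish x hS (by omega) _
      · rw [L1 m (b:ℕ) hbm, Matrix.mulVec_zero, Matrix.mulVec_zero]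
    · intro hn
      exact absurd (Finset.mem_univ _) hn
  have chain : ∀ (m : ℕ), Submodule.map (S.Estar x (r+m)).mulVecLin W ≠ ⊥ →
      ∀ k, k ≤ m → Submodule.map (S.Estar x (r+k)).mulVecLin W ≠ ⊥ := by
    intro m hmne k
    induction k with
    | zero => intro _; simpa using hrne
    | succ k ih =>
      intro hkm
      have hk' : Submodule.map (S.Estar x (r+k)).mulVecLin W ≠ ⊥ := ih (by omega)
      exact S.nogap x hS hW (r+k) hk' ⟨r+m, by omega, hmne⟩
  have thin := hthin W hW hrt
  have ynz : ∀ m, Submodule.map (S.Estar x (r+m)).mulVecLin W ≠ ⊥ → y m ≠ 0 := by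
    intro m
    induction m with
    | zero =>
      intro _
      show (S.Estar x r).mulVec (((S.A 1)^0).mulVec wr) ≠ 0
      rw [pow_zero, Matrix.one_mulVec, hwrdef, Matrix.mulVec_mulVec, S.Estar_idem]
      exact hwrne
    | succ m ih =>
      intro hne1
      have hmne : Submodule.map (S.Estar x (r+m)).mulVecLin W ≠ ⊥ :=
        chain (m+1) hne1 m (by omega)
      have hym := ih hmne
      have hD1 : r + (m+1) ≤ D := (hsupp_le _ hne1).2
      obtain ⟨u, huW, hu⟩ := S.exists_adj x hS hW (r+m) hmne ⟨r+m+1, by omega, hne1⟩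
      have hmemu : (S.Estar x (r+m)).mulVec u ∈ Submodule.map (S.Estar x (r+m)).mulVecLin W :=
        Submodule.mem_map.2 ⟨u, huW, Matrix.mulVecLin_apply _ _⟩
      obtain ⟨c, hc⟩ := mem_smul_of_finrank_le_one (thin (r+m)) (hymem m) hym hmemu
      have hkey : (S.Estar x (r+m+1)).mulVec ((S.A 1).mulVec ((S.Estar x (r+m)).mulVec u))
          = c • y (m+1) := by
        rw [hc, Matrix.mulVec_smul, Matrix.mulVec_smul, ← yrec m (by omega)]
      intro hy0
      rw [hkey, hy0, smul_zero] at hu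
      exact hu rfl
  have main : ∀ j : ℕ, ∀ v ∈ W, dotc χ ((S.Estar x j).mulVec v) = 0 := by
    intro j
    induction j using Nat.strong_induction_on with
    | _ j IH =>
      intro v hv
      by_cases hbot : Submodule.map (S.Estar x j).mulVecLin W = ⊥
      · rw [(map_mulVecLin_eq_bot_iff _ _).1 hbot v hv, dotc_zero_right]
      · obtain ⟨hrj, hjD⟩ := hsupp_le j hbot
        obtain ⟨m, rfl⟩ : ∃ m, j = r + m := ⟨j - r, by omega⟩
        have hym := ynz m hbot
        have hEv : (S.Estar x (r+m)).mulVec v ∈ Submodule.map (S.Estar x (r+m)).mulVecLin W :=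
          Submodule.mem_map.2 ⟨v, hv, Matrix.mulVecLin_apply _ _⟩
        obtain ⟨c, hc⟩ := mem_smul_of_finrank_le_one (thin (r+m)) (hymem m) hym hEv
        rw [hc, dotc_smul_right]
        suffices hzy : dotc χ (y m) = 0 by rw [hzy, mul_zero]
        have hzero : dotc χ (((S.A 1)^m).mulVec wr) = 0 := by
          rw [hwrdef]
          exact orthpow m r hr1 hrt u0 hu0W
        have hsum : ∑ k : Fin (D+1),
            dotc χ ((S.Estar x (k:ℕ)).mulVec (((S.A 1)^m).mulVec wr)) = 0 := by
          rw [← dotc_sum_right, ← S.decomp x (((S.A 1)^m).mulVec wr)]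
          exact hzero
        have hext : ∑ k : Fin (D+1),
            dotc χ ((S.Estar x (k:ℕ)).mulVec (((S.A 1)^m).mulVec wr)) = dotc χ (y m) := by
          rw [Finset.sum_eq_single (⟨r+m, by omega⟩ : Fin (D+1))]
          · intro b _ hb
            have hbne : (b:ℕ) ≠ r + m := by
              intro hbe
              exact hb (Fin.ext hbe)
            rcases lt_or_gt_of_ne hbne with hbm | hbm
            · exact IH (b:ℕ) (by omega) _ (hyW m)
            · rw [L1 m (b:ℕ) hbm, dotc_zero_right]
          · intro hn
            exact absurd (Finset.mem_univ _) hn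
        rw [hext] at hsum
        exact hsum
  calc dotc χ w = dotc χ (∑ i : Fin (D+1), (S.Estar x (i:ℕ)).mulVec w) := by
        rw [← S.decomp x w]
  _ = ∑ i : Fin (D+1), dotc χ ((S.Estar x (i:ℕ)).mulVec w) := dotc_sum_right _ _ _
  _ = 0 := Finset.sum_eq_zero fun i _ => main (i:ℕ) w hw
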